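/- Let (gᵗ) be generated by the greedy Sinkhorn iteration. Then for every t ≥ 1, every i ∈ {1,…,K} and every x_i ∈ 𝒳_i, −(L − 1) + η log(min_{j∈{1,…,K}, y∈𝒳ⱼ} μⱼ(y)) − ηL log(K C* n) ≤ gᵗ_i(x_i) ≤ 1. -/

import Mathlib

open scoped ENNReal BigOperators

noncomputable section

/-- `S_K^L`: the nonempty subsets of `{1,…,K}` of size at most `L`. -/
def SKL (K L : ℕ) : Finset (Finset (Fin K)) :=
  Finset.univ.filter fun A => A.Nonempty ∧ A.card ≤ L

/-- `S_K^L(i)`: the members of `S_K^L` containing `i`. -/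
def SKLi (K L : ℕ) (i : Fin K) : Finset (Finset (Fin K)) :=
  (SKL K L).filter fun A => i ∈ A

variable {K : ℕ} (𝒳 : Fin K → Type*) [∀ i, Fintype (𝒳 i)] [∀ i, DecidableEq (𝒳 i)]

/-- The `i`-th marginal `Pᵢ#π_A` of a coupling `π_A` on `𝒳^A`
(zero when `i ∉ A`). -/
def marg (A : Finset (Fin K)) (π : ((j : A) → 𝒳 j.1) → ℝ) (i : Fin K) (xi : 𝒳 i) : ℝ :=
  if hi : i ∈ A then
    ∑ x : (j : A) → 𝒳 j.1, (if x ⟨i, hi⟩ = xi then π x else 0)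
  else 0

/-- `Σ_{A ∈ S_K^L(i)} Pᵢ#π_A`, evaluated at `xi`. -/
def totMarg (L : ℕ) (π : (A : Finset (Fin K)) → ((j : A) → 𝒳 j.1) → ℝ)
    (i : Fin K) (xi : 𝒳 i) : ℝ :=
  ∑ A ∈ SKLi K L i, marg 𝒳 A (π A) i xi

/-- The couplings `π_A(g)` induced by potentials `g`, interpreted as `0` where the
cost is `+∞`. -/
def piInd (η : ℝ) (c : (A : Finset (Fin K)) → ((j : A) → 𝒳 j.1) → ℝ≥0∞)
    (g : (i : Fin K) → 𝒳 i → ℝ) (A : Finset (Fin K)) (x : (j : A) → 𝒳 j.1) : ℝ :=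
  if c A x = ⊤ then 0
  else Real.exp ((∑ j : A, g j.1 (x j) - (1 + (c A x).toReal)) / η)

/-- The dual objective `𝒢^L`. -/
def dualObj (η : ℝ) (L : ℕ) (c : (A : Finset (Fin K)) → ((j : A) → 𝒳 j.1) → ℝ≥0∞)
    (μ : (i : Fin K) → 𝒳 i → ℝ) (g : (i : Fin K) → 𝒳 i → ℝ) : ℝ :=
  (∑ A ∈ SKL K L, ∑ x : (j : A) → 𝒳 j.1, piInd 𝒳 η c g A x)
    - (1 / η) * ∑ i : Fin K, ∑ xi : 𝒳 i, g i xi * μ i xi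

/-- Unnormalized Kullback–Leibler divergence (convention `0 · log 0 = 0`). -/
def KLdiv {Z : Type*} [Fintype Z] (α β : Z → ℝ) : ℝ :=
  (∑ z, (β z - α z)) + ∑ z, α z * Real.log (α z / β z)

/-- ℓ¹ norm of a vector on a finite set. -/
def l1 {Z : Type*} [Fintype Z] (v : Z → ℝ) : ℝ := ∑ z, |v z|

/-- `g : ℕ → potentials` is generated by the greedy Sinkhorn iteration: `g⁰ = 0`,
and at each step a coordinate `I` maximizing the KL-discrepancy of the `I`-th
marginal is updated by the Sinkhorn formula, all others kept fixed. -/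
def IsGreedySinkhorn (η : ℝ) (L : ℕ)
    (c : (A : Finset (Fin K)) → ((j : A) → 𝒳 j.1) → ℝ≥0∞)
    (μ : (i : Fin K) → 𝒳 i → ℝ) (g : ℕ → (i : Fin K) → 𝒳 i → ℝ) : Prop :=
  (∀ i xi, g 0 i xi = 0) ∧
  ∀ t : ℕ, ∃ I : Fin K,
    (∀ i : Fin K,
      KLdiv (μ i) (totMarg 𝒳 L (piInd 𝒳 η c (g t)) i) ≤
        KLdiv (μ I) (totMarg 𝒳 L (piInd 𝒳 η c (g t)) I)) ∧
    (∀ xI : 𝒳 I, g (t + 1) I xI =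
      g t I xI + η * Real.log (μ I xI)
        - η * Real.log (totMarg 𝒳 L (piInd 𝒳 η c (g t)) I xI)) ∧
    (∀ i : Fin K, i ≠ I → g (t + 1) i = g t i)

/-- The marginal error `E_t` of the greedy Sinkhorn iteration. -/
def Err (η : ℝ) (L : ℕ) (c : (A : Finset (Fin K)) → ((j : A) → 𝒳 j.1) → ℝ≥0∞)
    (μ : (i : Fin K) → 𝒳 i → ℝ) (g : ℕ → (i : Fin K) → 𝒳 i → ℝ) (t : ℕ) : ℝ :=
  ∑ i : Fin K,
    l1 (fun xi : 𝒳 i => μ i xi - totMarg 𝒳 L (piInd 𝒳 η c (g t)) i xi)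

/-- `C* := maxᵢ nᵢ / n`. -/
def Cstar (n : ℝ) : ℝ := ((Finset.univ.sup fun i : Fin K => Fintype.card (𝒳 i) : ℕ) : ℝ) / n

/-- `min_{j, y} μ_j(y)`. -/
def muMin (μ : (i : Fin K) → 𝒳 i → ℝ) : ℝ :=
  sInf {v : ℝ | ∃ (j : Fin K) (y : 𝒳 j), v = μ j y}

/-- `R̄ := L − η log min_{j,y} μ_j(y) + η L log(K C* n)`. -/
def Rbar (η : ℝ) (L : ℕ) (n : ℝ) (μ : (i : Fin K) → 𝒳 i → ℝ) : ℝ :=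
  (L : ℝ) - η * Real.log (muMin 𝒳 μ) + η * L * Real.log (K * Cstar 𝒳 n * n)

/-!
The singleton block `{i}` alone contributes `exp ((gᵢ(xᵢ) - 1) / η)` to the `i`-th marginal,
so a Sinkhorn update always produces `gᵢ ≤ 1 + η log μᵢ ≤ 1`. Conversely, once all potentials
are at most `1`, a coupling `π_A` with `xᵢ` fixed is at most `exp ((gᵢ(xᵢ) + L - 2) / η)`, and
there are at most `K ^ L` blocks, each with at most `(maxⱼ nⱼ) ^ L` points; this bounds the
marginal from above and hence the updated potential from below. Starting from `g⁰ = 0`, both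
bounds propagate by induction.
-/

open Finset

theorem card_SKL_le_pow (K L : ℕ) : (SKL K L).card ≤ K ^ L := by
  classical
  have hsub : SKL K L ⊆ univ.image fun f : Fin L → Fin K => univ.image f := by
    intro A hA
    obtain ⟨⟨a, ha⟩, hcard⟩ := (mem_filter.mp hA).2
    have : Nonempty A := ⟨⟨a, ha⟩⟩
    let e : A ↪ Fin L := A.equivFin.toEmbedding.trans (Fin.castLEEmb (by simpa using hcard))
    refine mem_image.mpr ⟨Subtype.val ∘ Function.invFun e, mem_univ _, ?_⟩
    ext b
    simp only [mem_image, mem_univ, true_and, Function.comp_apply]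
    constructor
    · rintro ⟨k, rfl⟩
      exact (Function.invFun e k).2
    · intro hb
      obtain ⟨k, hk⟩ := Function.invFun_surjective e.injective ⟨b, hb⟩
      exact ⟨k, by rw [hk]⟩
  calc (SKL K L).card ≤ (univ : Finset (Fin L → Fin K)).card :=
        (card_le_card hsub).trans card_image_le
    _ = K ^ L := by simp

theorem card_SKLi_le_pow (K L : ℕ) (i : Fin K) : (SKLi K L i).card ≤ K ^ L :=
  (card_le_card (filter_subset _ _)).trans (card_SKL_le_pow K L)

theorem singleton_mem_SKLi {K L : ℕ} (hL : 1 ≤ L) (i : Fin K) : {i} ∈ SKLi K L i := by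
  simp [SKLi, SKL, hL]

theorem mem_SKLi {K L : ℕ} {i : Fin K} {A : Finset (Fin K)} :
    A ∈ SKLi K L i ↔ A.card ≤ L ∧ i ∈ A := by
  simp only [SKLi, SKL, mem_filter, mem_univ, true_and]
  exact ⟨fun ⟨⟨_, h⟩, hi⟩ => ⟨h, hi⟩, fun ⟨h, hi⟩ => ⟨⟨⟨i, hi⟩, h⟩, hi⟩⟩

theorem sum_le_add_card_sub_one {ι : Type*} [Fintype ι] [DecidableEq ι] {f : ι → ℝ}
    (hf : ∀ j, f j ≤ 1) (a : ι) : ∑ j, f j ≤ f a + (Fintype.card ι - 1) := by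
  rw [← sum_erase_add _ _ (mem_univ a), add_comm]
  gcongr
  calc ∑ j ∈ univ.erase a, f j ≤ (univ.erase a).card • (1 : ℝ) :=
        sum_le_card_nsmul _ _ _ fun j _ => hf j
    _ = Fintype.card ι - 1 := by
      rw [card_erase_of_mem (mem_univ a), card_univ, nsmul_one,
        Nat.cast_sub (Fintype.card_pos_iff.mpr ⟨a⟩)]
      simp

theorem sinkhorn_update_le_one {η a m T : ℝ} (hη : 0 < η) (hm : 0 < m) (hm1 : m ≤ 1)
    (hT : Real.exp ((a - 1) / η) ≤ T) : a + η * Real.log m - η * Real.log T ≤ 1 := by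
  have hlogT : (a - 1) / η ≤ Real.log T := by
    simpa using Real.log_le_log (Real.exp_pos _) hT
  have : a - 1 ≤ η * Real.log T := by rwa [div_le_iff₀' hη] at hlogT
  nlinarith [Real.log_nonpos hm.le hm1]

theorem le_sinkhorn_update {η a m T M : ℝ} {L : ℕ} (hη : 0 < η) (hT : 0 < T) (hM : 0 < M)
    (hTM : T ≤ M ^ L * Real.exp ((a + L - 2) / η)) :
    η * Real.log m - η * L * Real.log M - (L - 2) ≤ a + η * Real.log m - η * Real.log T := by
  have hlogT : Real.log T ≤ L * Real.log M + (a + L - 2) / η := by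
    simpa [Real.log_mul, Real.log_pow, hM.ne', (Real.exp_pos _).ne'] using
      Real.log_le_log hT hTM
  have := mul_le_mul_of_nonneg_left hlogT hη.le
  rw [mul_add, mul_div_cancel₀ _ hη.ne'] at this
  linarith

section Potentials

variable {K : ℕ} {𝒳 : Fin K → Type*}

theorem piInd_nonneg (η : ℝ) (c : (A : Finset (Fin K)) → ((j : A) → 𝒳 j.1) → ℝ≥0∞)
    (g : (i : Fin K) → 𝒳 i → ℝ) (A : Finset (Fin K)) (x : (j : A) → 𝒳 j.1) :
    0 ≤ piInd 𝒳 η c g A x := by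
  unfold piInd
  split
  · exact le_rfl
  · exact (Real.exp_pos _).le

theorem piInd_le_exp {L : ℕ} {η : ℝ} {c : (A : Finset (Fin K)) → ((j : A) → 𝒳 j.1) → ℝ≥0∞}
    (hη : 0 < η) {g : (i : Fin K) → 𝒳 i → ℝ} (hg : ∀ j y, g j y ≤ 1)
    {i : Fin K} {A : Finset (Fin K)} (hA : A ∈ SKLi K L i) {xi : 𝒳 i}
    (x : (j : A) → 𝒳 j.1) (hx : x ⟨i, (mem_SKLi.mp hA).2⟩ = xi) :
    piInd 𝒳 η c g A x ≤ Real.exp ((g i xi + L - 2) / η) := by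
  obtain ⟨hcard, hi⟩ := mem_SKLi.mp hA
  unfold piInd
  split
  · exact (Real.exp_pos _).le
  · refine Real.exp_le_exp.mpr (div_le_div_of_nonneg_right ?_ hη.le)
    have hsum := sum_le_add_card_sub_one (fun j : A => hg j.1 (x j)) ⟨i, hi⟩
    rw [hx, Fintype.card_coe] at hsum
    have : (A.card : ℝ) ≤ L := by exact_mod_cast hcard
    linarith [ENNReal.toReal_nonneg (a := c A x)]

theorem muMin_eq_iInf (μ : (i : Fin K) → 𝒳 i → ℝ) :
    muMin 𝒳 μ = ⨅ p : (Σ j, 𝒳 j), μ p.1 p.2 := by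
  rw [muMin, iInf]
  congr 1
  ext v
  simp [Sigma.exists, eq_comm]

section Fintype

variable [∀ i, Fintype (𝒳 i)]

variable (𝒳) in
def maxCard : ℕ := univ.sup fun i : Fin K => Fintype.card (𝒳 i)

theorem maxCard_pos {i : Fin K} (xi : 𝒳 i) : 0 < maxCard 𝒳 :=
  (Fintype.card_pos_iff.mpr ⟨xi⟩).trans_le
    (le_sup (f := fun i => Fintype.card (𝒳 i)) (mem_univ i))

variable (𝒳) in
theorem Cstar_mul {n : ℝ} (hn : n ≠ 0) : Cstar 𝒳 n * n = maxCard 𝒳 :=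
  div_mul_cancel₀ _ hn

variable (𝒳) in
theorem card_pi_le_maxCard_pow (A : Finset (Fin K)) :
    Fintype.card ((j : A) → 𝒳 j.1) ≤ maxCard 𝒳 ^ A.card := by
  rw [Fintype.card_pi, ← Fintype.card_coe A, ← card_univ]
  exact prod_le_pow_card _ _ _ fun j _ => le_sup (f := fun i => Fintype.card (𝒳 i)) (mem_univ j.1)

theorem muMin_le (μ : (i : Fin K) → 𝒳 i → ℝ) (j : Fin K) (y : 𝒳 j) : muMin 𝒳 μ ≤ μ j y := by
  rw [muMin_eq_iInf]
  exact ciInf_le (Set.finite_range _).bddBelow (⟨j, y⟩ : Σ j, 𝒳 j)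

theorem muMin_pos {μ : (i : Fin K) → 𝒳 i → ℝ} (hμ : ∀ i xi, 0 < μ i xi) {i : Fin K}
    (xi : 𝒳 i) : 0 < muMin 𝒳 μ := by
  have : Nonempty (Σ j, 𝒳 j) := ⟨⟨i, xi⟩⟩
  obtain ⟨p, hp⟩ := exists_eq_ciInf_of_finite (f := fun p : (Σ j, 𝒳 j) => μ p.1 p.2)
  rw [muMin_eq_iInf, ← hp]
  exact hμ p.1 p.2

theorem le_one_of_sum_eq_one {μ : (i : Fin K) → 𝒳 i → ℝ} (hμ : ∀ i xi, 0 ≤ μ i xi)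
    (hmass : ∑ i, ∑ xi, μ i xi = 1) (j : Fin K) (y : 𝒳 j) : μ j y ≤ 1 :=
  calc μ j y ≤ ∑ y', μ j y' := single_le_sum (fun y' _ => hμ j y') (mem_univ y)
    _ ≤ ∑ i, ∑ xi, μ i xi :=
      single_le_sum (f := fun i => ∑ xi, μ i xi) (fun i _ => sum_nonneg fun xi _ => hμ i xi)
        (mem_univ j)
    _ = 1 := hmass

end Fintype

section Marginals

variable [∀ i, Fintype (𝒳 i)] [∀ i, DecidableEq (𝒳 i)]

theorem marg_nonneg {A : Finset (Fin K)} {π : ((j : A) → 𝒳 j.1) → ℝ} (hπ : ∀ x, 0 ≤ π x)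
    (i : Fin K) (xi : 𝒳 i) : 0 ≤ marg 𝒳 A π i xi := by
  unfold marg
  split
  · exact sum_nonneg fun x _ => by split <;> simp [hπ]
  · exact le_rfl

theorem marg_le_totMarg {L : ℕ} {π : (A : Finset (Fin K)) → ((j : A) → 𝒳 j.1) → ℝ}
    (hπ : ∀ A x, 0 ≤ π A x) {i : Fin K} {A : Finset (Fin K)} (hA : A ∈ SKLi K L i)
    (xi : 𝒳 i) : marg 𝒳 A (π A) i xi ≤ totMarg 𝒳 L π i xi :=
  single_le_sum (f := fun A => marg 𝒳 A (π A) i xi) (fun B _ => marg_nonneg (hπ B) i xi) hA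

theorem marg_singleton (i : Fin K) (π : ((j : ({i} : Finset (Fin K))) → 𝒳 j.1) → ℝ)
    (xi : 𝒳 i) :
    marg 𝒳 {i} π i xi =
      π ((Equiv.piUnique fun j : ({i} : Finset (Fin K)) => 𝒳 j.1).symm xi) := by
  rw [marg, dif_pos (mem_singleton_self i), ← (Equiv.piUnique _).symm.sum_comp]
  exact Fintype.sum_ite_eq' xi _

theorem marg_le_card_mul {A : Finset (Fin K)} {π : ((j : A) → 𝒳 j.1) → ℝ} {i : Fin K}
    (hi : i ∈ A) {xi : 𝒳 i} {B : ℝ} (hB : 0 ≤ B) (hπ : ∀ x, x ⟨i, hi⟩ = xi → π x ≤ B) :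
    marg 𝒳 A π i xi ≤ Fintype.card ((j : A) → 𝒳 j.1) * B := by
  rw [marg, dif_pos hi]
  calc ∑ x, (if x ⟨i, hi⟩ = xi then π x else 0) ≤ ∑ _x : (j : A) → 𝒳 j.1, B :=
        sum_le_sum fun x _ => by split_ifs with hx; exacts [hπ x hx, hB]
    _ = _ := by simp

variable {L : ℕ} {η : ℝ} {c : (A : Finset (Fin K)) → ((j : A) → 𝒳 j.1) → ℝ≥0∞}

theorem exp_le_totMarg_piInd (hL : 1 ≤ L)
    (hc : ∀ (i : Fin K) (x : (j : ({i} : Finset (Fin K))) → 𝒳 j.1), c {i} x = 0)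
    (g : (i : Fin K) → 𝒳 i → ℝ) (i : Fin K) (xi : 𝒳 i) :
    Real.exp ((g i xi - 1) / η) ≤ totMarg 𝒳 L (piInd 𝒳 η c g) i xi := by
  have h := marg_le_totMarg (piInd_nonneg η c g) (singleton_mem_SKLi hL i) xi
  rwa [marg_singleton, piInd, hc, if_neg ENNReal.zero_ne_top, Fintype.sum_unique,
    ENNReal.toReal_zero, add_zero] at h

theorem totMarg_piInd_le (hη : 0 < η) {g : (i : Fin K) → 𝒳 i → ℝ} (hg : ∀ j y, g j y ≤ 1)
    (i : Fin K) (xi : 𝒳 i) :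
    totMarg 𝒳 L (piInd 𝒳 η c g) i xi ≤
      ((K : ℝ) * maxCard 𝒳) ^ L * Real.exp ((g i xi + L - 2) / η) := by
  set E := Real.exp ((g i xi + L - 2) / η)
  have hmarg : ∀ A ∈ SKLi K L i,
      marg 𝒳 A (piInd 𝒳 η c g A) i xi ≤ (maxCard 𝒳 : ℝ) ^ L * E := by
    intro A hA
    have hcard : Fintype.card ((j : A) → 𝒳 j.1) ≤ maxCard 𝒳 ^ L :=
      (card_pi_le_maxCard_pow 𝒳 A).trans
        (Nat.pow_le_pow_right (maxCard_pos xi) (mem_SKLi.mp hA).1)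
    calc marg 𝒳 A (piInd 𝒳 η c g A) i xi ≤ Fintype.card ((j : A) → 𝒳 j.1) * E :=
          marg_le_card_mul _ (Real.exp_pos _).le (piInd_le_exp hη hg hA)
      _ ≤ (maxCard 𝒳 : ℝ) ^ L * E := by gcongr; exact_mod_cast hcard
  calc totMarg 𝒳 L (piInd 𝒳 η c g) i xi ≤ (SKLi K L i).card • ((maxCard 𝒳 : ℝ) ^ L * E) :=
        sum_le_card_nsmul _ _ _ hmarg
    _ ≤ (K : ℝ) ^ L * ((maxCard 𝒳 : ℝ) ^ L * E) := by
        rw [nsmul_eq_mul]; gcongr; exact_mod_cast card_SKLi_le_pow K L i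
    _ = ((K : ℝ) * maxCard 𝒳) ^ L * E := by ring

end Marginals

theorem IsGreedySinkhorn.bounds [∀ i, Fintype (𝒳 i)] [∀ i, DecidableEq (𝒳 i)] {L : ℕ} {η : ℝ}
    {c : (A : Finset (Fin K)) → ((j : A) → 𝒳 j.1) → ℝ≥0∞} {μ : (i : Fin K) → 𝒳 i → ℝ}
    {g : ℕ → (i : Fin K) → 𝒳 i → ℝ} (hg : IsGreedySinkhorn 𝒳 η L c μ g) (hL : 1 ≤ L)
    (hη : 0 < η) (hc : ∀ (i : Fin K) (x : (j : ({i} : Finset (Fin K))) → 𝒳 j.1), c {i} x = 0)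
    (hμ : ∀ i xi, 0 < μ i xi) (hmass : ∑ i, ∑ xi, μ i xi = 1) (t : ℕ) (i : Fin K) (xi : 𝒳 i) :
    -((L : ℝ) - 1) + η * Real.log (muMin 𝒳 μ) - η * L * Real.log (K * maxCard 𝒳) ≤ g t i xi ∧
      g t i xi ≤ 1 := by
  set lb := -((L : ℝ) - 1) + η * Real.log (muMin 𝒳 μ) - η * L * Real.log (K * maxCard 𝒳)
  have hμ1 := le_one_of_sum_eq_one (fun i xi => (hμ i xi).le) hmass
  have hmin := muMin_pos hμ xi
  have hM : (1 : ℝ) ≤ K * maxCard 𝒳 := by exact_mod_cast Nat.mul_pos i.pos (maxCard_pos xi)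
  have hlb : lb ≤ 0 := by
    have hlog := Real.log_nonpos hmin.le ((muMin_le μ i xi).trans (hμ1 i xi))
    have : (1 : ℝ) ≤ L := by exact_mod_cast hL
    have := mul_nonpos_of_nonneg_of_nonpos hη.le hlog
    have : 0 ≤ η * L * Real.log (K * maxCard 𝒳) := by
      have := Real.log_nonneg hM
      positivity
    linarith
  suffices ∀ j y, lb ≤ g t j y ∧ g t j y ≤ 1 from this i xi
  induction t with
  | zero =>
    intro j y
    rw [hg.1]
    exact ⟨hlb, zero_le_one⟩
  | succ t ih =>
    obtain ⟨I, -, hupdate, hfix⟩ := hg.2 t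
    intro j y
    by_cases hj : j = I
    · subst hj
      rw [hupdate y]
      have hT := exp_le_totMarg_piInd (η := η) hL hc (g t) j y
      refine ⟨?_, sinkhorn_update_le_one hη (hμ j y) (hμ1 j y) hT⟩
      have := le_sinkhorn_update (m := μ j y) hη ((Real.exp_pos _).trans_le hT)
        (by linarith) (totMarg_piInd_le hη (fun j y => (ih j y).2) j y)
      have := mul_le_mul_of_nonneg_left (Real.log_le_log hmin (muMin_le μ j y)) hη.le
      linarith
    · rw [hfix j hj]
      exact ih j y

end Potentials

theorem stmt13_general (K L : ℕ) (hL : 1 ≤ L)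
    (𝒳 : Fin K → Type*) [∀ i, Fintype (𝒳 i)] [∀ i, DecidableEq (𝒳 i)]
    (η : ℝ) (hη : 0 < η) (n : ℝ) (hn : 0 < n)
    (c : (A : Finset (Fin K)) → ((j : A) → 𝒳 j.1) → ℝ≥0∞)
    (hc : ∀ (i : Fin K) (x : (j : ({i} : Finset (Fin K))) → 𝒳 j.1), c {i} x = 0)
    (μ : (i : Fin K) → 𝒳 i → ℝ) (hμpos : ∀ i xi, 0 < μ i xi)
    (hmass : ∑ i : Fin K, ∑ xi : 𝒳 i, μ i xi = 1)
    (g : ℕ → (i : Fin K) → 𝒳 i → ℝ)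
    (hg : IsGreedySinkhorn 𝒳 η L c μ g) :
    ∀ t : ℕ, 1 ≤ t → ∀ (i : Fin K) (xi : 𝒳 i),
      -((L : ℝ) - 1) + η * Real.log (muMin 𝒳 μ)
          - η * L * Real.log (K * Cstar 𝒳 n * n) ≤ g t i xi ∧
      g t i xi ≤ 1 := by
  intro t _ i xi
  rw [mul_assoc (K : ℝ), Cstar_mul 𝒳 hn.ne']
  exact hg.bounds hL hη hc hμpos hmass t i xi

/-- along the greedy Sinkhorn iteration, for every `t ≥ 1`, every
`i` and every `x_i ∈ 𝒳 i`,
`−(L−1) + η log min_{j,y} μ_j(y) − η L log(K C* n) ≤ gᵗ_i(x_i) ≤ 1`. -/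
theorem stmt13 (K L : ℕ) (hK : 0 < K) (hL : 1 ≤ L) (hLK : L ≤ K)
    (𝒳 : Fin K → Type*) [∀ i, Fintype (𝒳 i)] [∀ i, DecidableEq (𝒳 i)]
    [∀ i, Nonempty (𝒳 i)]
    (η : ℝ) (hη : 0 < η) (n : ℝ) (hn : 0 < n)
    (c : (A : Finset (Fin K)) → ((j : A) → 𝒳 j.1) → ℝ≥0∞)
    (hc : ∀ (i : Fin K) (x : (j : ({i} : Finset (Fin K))) → 𝒳 j.1), c {i} x = 0)
    (μ : (i : Fin K) → 𝒳 i → ℝ) (hμpos : ∀ i xi, 0 < μ i xi)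
    (hmass : ∑ i : Fin K, ∑ xi : 𝒳 i, μ i xi = 1)
    (g : ℕ → (i : Fin K) → 𝒳 i → ℝ)
    (hg : IsGreedySinkhorn 𝒳 η L c μ g) :
    ∀ t : ℕ, 1 ≤ t → ∀ (i : Fin K) (xi : 𝒳 i),
      -((L : ℝ) - 1) + η * Real.log (muMin 𝒳 μ)
          - η * L * Real.log (K * Cstar 𝒳 n * n) ≤ g t i xi ∧
      g t i xi ≤ 1 :=
  stmt13_general K L hL 𝒳 η hη n hn c hc μ hμpos hmass g hg

end
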